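/- Let G be a topological group and let X be a compact Hausdorff uniform space with a jointly continuous G-action which is minimal (every orbit dense). If every point x ∈ X is almost automorphic — i.e., for every x ∈ X, every ultrafilter 𝒰 on G and every y ∈ X, convergence of t ↦ t•x to y along 𝒰 implies convergence of t ↦ t⁻¹•y to x along 𝒰 — then the action is uniformly equicontinuous: the family of maps {x ↦ g•x : g ∈ G} is uniformly equicontinuous with respect to the uniformity of X. -/

import Mathlib

set_option linter.unusedSectionVars false
set_option maxHeartbeats 1000000

open Filter Topology Set Uniformity

namespace Stmt18Aux

variable {H : Type*} [Group H] {Y : Type*} [TopologicalSpace Y] [CompactSpace Y] [T2Space Y]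

/-- Limit of an ultrafilter in a compact Hausdorff space. -/
noncomputable def uLim [Nonempty Y] (F : Ultrafilter Y) : Y :=
  (isCompact_univ.ultrafilter_le_nhds F (by simp)).choose

lemma uLim_spec [Nonempty Y] (F : Ultrafilter Y) : ↑F ≤ 𝓝 (uLim F) :=
  (isCompact_univ.ultrafilter_le_nhds F (by simp)).choose_spec.2

lemma le_nhds_unique {F : Filter Y} [F.NeBot] {a b : Y} (h1 : F ≤ 𝓝 a) (h2 : F ≤ 𝓝 b) :
    a = b :=
  tendsto_nhds_unique (tendsto_id'.mpr h1) (tendsto_id'.mpr h2)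

lemma uLim_eq [Nonempty Y] {F : Ultrafilter Y} {a : Y} (h : ↑F ≤ 𝓝 a) : uLim F = a :=
  le_nhds_unique (uLim_spec F) h

lemma exists_ultrafilter_tendsto {α : Type*} [Nonempty α] {f : α → Y} {z : Y}
    (hz : z ∈ closure (Set.range f)) :
    ∃ 𝒱 : Ultrafilter α, Tendsto f ↑𝒱 (𝓝 z) := by
  classical
  obtain ⟨u, hmem, hle⟩ := mem_closure_iff_ultrafilter.mp hz
  set s : Y → α := fun y => if h : ∃ a, f a = y then h.choose else Classical.arbitrary α with hs
  refine ⟨u.map s, ?_⟩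
  rw [Ultrafilter.coe_map, tendsto_map'_iff]
  have hcong : (f ∘ s) =ᶠ[↑u] id := by
    filter_upwards [hmem] with y hy
    rcases hy with ⟨a, ha⟩
    have hex : ∃ a, f a = y := ⟨a, ha⟩
    simp only [Function.comp_apply, hs, dif_pos hex, id_eq]
    exact hex.choose_spec
  calc Filter.map (f ∘ s) ↑u = Filter.map id ↑u := Filter.map_congr hcong
  _ = ↑u := Filter.map_id
  _ ≤ 𝓝 z := hle

section Action

variable [MulAction H Y]

/-- The limit operator associated to an ultrafilter on the acting group. -/
noncomputable def TT (𝒰 : Ultrafilter H) (y : Y) : Y :=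
  haveI : Nonempty Y := ⟨y⟩
  uLim (𝒰.map (fun h => h • y))

lemma tendsto_TT (𝒰 : Ultrafilter H) (y : Y) :
    Tendsto (fun h : H => h • y) ↑𝒰 (𝓝 (TT 𝒰 y)) := by
  haveI : Nonempty Y := ⟨y⟩
  have h := uLim_spec (𝒰.map (fun h => h • y))
  rw [Ultrafilter.coe_map] at h
  exact h

lemma TT_eq {𝒰 : Ultrafilter H} {y w : Y}
    (h : Tendsto (fun h : H => h • y) ↑𝒰 (𝓝 w)) : TT 𝒰 y = w :=
  tendsto_nhds_unique (tendsto_TT 𝒰 y) h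

/-- Image of an ultrafilter under inversion. -/
def invU (𝒰 : Ultrafilter H) : Ultrafilter H := 𝒰.map (fun h => h⁻¹)

lemma tendsto_invU_iff {𝒰 : Ultrafilter H} {f : H → Y} {w : Y} :
    Tendsto f ↑(invU 𝒰) (𝓝 w) ↔ Tendsto (fun h : H => f h⁻¹) ↑𝒰 (𝓝 w) := by
  rw [invU, Ultrafilter.coe_map, tendsto_map'_iff]
  rfl

lemma invU_invU (𝒰 : Ultrafilter H) : invU (invU 𝒰) = 𝒰 := by
  simp only [invU, Ultrafilter.map_map]
  have : ((fun h : H => h⁻¹) ∘ fun h : H => h⁻¹) = id := by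
    funext h; simp
  rw [this, Ultrafilter.map_id]

/-- The almost automorphy hypothesis, in the form used here. -/
def AAH : Prop :=
  ∀ (𝒰 : Ultrafilter H) (y w : Y),
    Tendsto (fun t : H => t • y) (𝒰 : Filter H) (𝓝 w) →
    Tendsto (fun t : H => t⁻¹ • w) (𝒰 : Filter H) (𝓝 y)

variable {Hc : @AAH H _ Y _ _}

lemma AA1 (haa : @AAH H _ Y _ _) (𝒰 : Ultrafilter H) (y : Y) :
    TT (invU 𝒰) (TT 𝒰 y) = y := by
  apply TT_eq
  rw [tendsto_invU_iff]
  simpa using haa 𝒰 y (TT 𝒰 y) (tendsto_TT 𝒰 y)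

lemma AA2 (haa : @AAH H _ Y _ _) (𝒰 : Ultrafilter H) (y : Y) :
    TT 𝒰 (TT (invU 𝒰) y) = y := by
  have := AA1 haa (invU 𝒰) y
  rwa [invU_invU] at this

lemma tendsto_bind {α β : Type*} (𝒱 : Ultrafilter α) (k : α → Ultrafilter β) {F : β → Y}
    {φ : α → Y} {L : Y} (h1 : ∀ a, Tendsto F ↑(k a) (𝓝 (φ a)))
    (h2 : Tendsto φ ↑𝒱 (𝓝 L)) : Tendsto F ↑(𝒱.bind k) (𝓝 L) := by
  rw [tendsto_def]
  intro U hU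
  rcases mem_nhds_iff.mp hU with ⟨V, hVU, hVopen, hLV⟩
  have key : {a | F ⁻¹' U ∈ k a} ∈ 𝒱 := by
    filter_upwards [h2 (hVopen.mem_nhds hLV)] with a ha
    exact (k a).toFilter.sets_of_superset ((h1 a) (hVopen.mem_nhds ha)) (preimage_mono hVU)
  exact key

lemma swap_lemma (haa : @AAH H _ Y _ _) (hc : ∀ h : H, Continuous fun z : Y => h • z)
    (𝒰 𝒱 : Ultrafilter H) (x₀ : Y) :
    Tendsto (fun s : H => TT 𝒰 (s • x₀)) ↑𝒱 (𝓝 (TT 𝒰 (TT 𝒱 x₀))) := by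
  have : Nonempty Y := ⟨x₀⟩
  set c : Y := uLim (𝒱.map (fun s => TT 𝒰 (s • x₀))) with hc_def
  have hcl : Tendsto (fun s : H => TT 𝒰 (s • x₀)) ↑𝒱 (𝓝 c) := by
    have := uLim_spec (𝒱.map (fun s => TT 𝒰 (s • x₀)))
    rwa [Ultrafilter.coe_map] at this
  suffices hce : c = TT 𝒰 (TT 𝒱 x₀) by rwa [hce] at hcl
  set Ω : Ultrafilter H := 𝒱.bind (fun s => 𝒰.map (fun h => h * s)) with hΩdef
  have hΩ1 : Tendsto (fun g : H => g • x₀) ↑Ω (𝓝 c) := by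
    refine tendsto_bind _ _ (φ := fun s => TT 𝒰 (s • x₀)) (fun s => ?_) hcl
    rw [Ultrafilter.coe_map, tendsto_map'_iff]
    have := tendsto_TT 𝒰 (s • x₀)
    simpa [Function.comp_def, mul_smul] using this
  have hΩ2 : Tendsto (fun g : H => g⁻¹ • c) ↑Ω (𝓝 x₀) := haa Ω x₀ c hΩ1
  set w : Y := TT (invU 𝒰) c with hwdef
  have hΩ3 : Tendsto (fun g : H => g⁻¹ • c) ↑Ω (𝓝 (TT (invU 𝒱) w)) := by
    refine tendsto_bind _ _ (φ := fun s => s⁻¹ • w) (fun s => ?_) ?_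
    · rw [Ultrafilter.coe_map, tendsto_map'_iff]
      have h1 : Tendsto (fun h : H => h⁻¹ • c) ↑𝒰 (𝓝 w) := by
        have := tendsto_TT (invU 𝒰) c
        rw [tendsto_invU_iff] at this
        exact this
      have h2 : Tendsto (fun h : H => s⁻¹ • (h⁻¹ • c)) ↑𝒰 (𝓝 (s⁻¹ • w)) :=
        ((hc s⁻¹).tendsto w).comp h1
      refine h2.congr fun h => ?_
      simp [Function.comp_def, mul_inv_rev, mul_smul]
    · have := tendsto_TT (invU 𝒱) w
      rw [tendsto_invU_iff] at this
      exact this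
  have hx : TT (invU 𝒱) w = x₀ := tendsto_nhds_unique hΩ3 hΩ2
  have hw : w = TT 𝒱 x₀ := by
    conv_lhs => rw [← AA2 haa 𝒱 w]
    rw [hx]
  have : TT 𝒰 (TT (invU 𝒰) c) = c := AA2 haa 𝒰 c
  rw [← this, ← hwdef, hw]

end Action

section MetricCore

variable {H : Type*} [Group H] {Y : Type*} [MetricSpace Y] [CompactSpace Y] [MulAction H Y]

variable (haa : AAH (H := H) (Y := Y)) (hc : ∀ h : H, Continuous fun z : Y => h • z)
    (x₀ : Y) (hdense : DenseRange (fun h : H => h • x₀))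

include haa hc hdense

/-- Orbit approximation controlled by a limit operator. -/
lemma approx (𝒰 : Ultrafilter H) (z : Y) {U W : Set Y} (hU : U ∈ 𝓝 z)
    (hW : W ∈ 𝓝 (TT 𝒰 z)) : ∃ s : H, s • x₀ ∈ U ∧ TT 𝒰 (s • x₀) ∈ W := by
  have hz : z ∈ closure (Set.range (fun h : H => h • x₀)) := by
    rw [hdense.closure_range]; trivial
  obtain ⟨𝒱, h𝒱⟩ := exists_ultrafilter_tendsto hz
  have hTT : TT 𝒱 x₀ = z := TT_eq h𝒱
  have hswap := swap_lemma haa hc 𝒰 𝒱 x₀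
  rw [hTT] at hswap
  have h1 : {s : H | s • x₀ ∈ U} ∈ 𝒱 := h𝒱 hU
  have h2 : {s : H | TT 𝒰 (s • x₀) ∈ W} ∈ 𝒱 := hswap hW
  obtain ⟨s, hs1, hs2⟩ := 𝒱.nonempty_of_mem (Filter.inter_mem h1 h2)
  exact ⟨s, hs1, hs2⟩

/-- Every limit operator is continuous. -/
lemma TT_cont (𝒰 : Ultrafilter H) : Continuous (fun z : Y => TT 𝒰 z) := by
  rw [continuous_iff_seqContinuous]
  intro z f hz
  set q : ℕ → ℝ := fun m => 1 / (m + 1) with hq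
  have hqpos : ∀ m : ℕ, 0 < q m := fun m => by positivity
  have hsel : ∀ m : ℕ, ∃ s : H, s • x₀ ∈ Metric.ball (z m) (q m) ∧
      TT 𝒰 (s • x₀) ∈ Metric.ball (TT 𝒰 (z m)) (q m) := fun m =>
    approx haa hc x₀ hdense 𝒰 (z m) (Metric.ball_mem_nhds _ (hqpos m))
      (Metric.ball_mem_nhds _ (hqpos m))
  choose s hs1 hs2 using hsel
  have hq0 : Tendsto q atTop (𝓝 0) := tendsto_one_div_add_atTop_nhds_zero_nat
  -- s m • x₀ → f
  have horb : Tendsto (fun m => s m • x₀) atTop (𝓝 f) := by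
    rw [tendsto_iff_dist_tendsto_zero]
    apply tendsto_of_tendsto_of_tendsto_of_le_of_le (g := fun _ => (0:ℝ))
      (h := fun m => q m + dist (z m) f) tendsto_const_nhds
    · have : Tendsto (fun m => dist (z m) f) atTop (𝓝 0) :=
        tendsto_iff_dist_tendsto_zero.mp hz
      simpa using hq0.add this
    · exact fun m => dist_nonneg
    · intro m
      calc dist (s m • x₀) f ≤ dist (s m • x₀) (z m) + dist (z m) f := dist_triangle _ _ _
      _ ≤ q m + dist (z m) f := by
          have := hs1 m
          rw [Metric.mem_ball] at this
          linarith [this]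
  -- TT 𝒰 (s m • x₀) → TT 𝒰 f
  have hTTorb : Tendsto (fun m => TT 𝒰 (s m • x₀)) atTop (𝓝 (TT 𝒰 f)) := by
    rw [tendsto_iff_ultrafilter]
    intro 𝒩 h𝒩
    set 𝒱 : Ultrafilter H := 𝒩.map s with h𝒱def
    have hv : Tendsto (fun t : H => t • x₀) ↑𝒱 (𝓝 f) := by
      rw [h𝒱def, Ultrafilter.coe_map, tendsto_map'_iff]
      exact (horb.mono_left h𝒩)
    have := swap_lemma haa hc 𝒰 𝒱 x₀
    rw [TT_eq hv] at this
    rw [h𝒱def, Ultrafilter.coe_map, tendsto_map'_iff] at this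
    exact this
  -- combine
  rw [tendsto_iff_dist_tendsto_zero]
  apply tendsto_of_tendsto_of_tendsto_of_le_of_le (g := fun _ => (0:ℝ))
    (h := fun m => q m + dist (TT 𝒰 (s m • x₀)) (TT 𝒰 f)) tendsto_const_nhds
  · have : Tendsto (fun m => dist (TT 𝒰 (s m • x₀)) (TT 𝒰 f)) atTop (𝓝 0) :=
      tendsto_iff_dist_tendsto_zero.mp hTTorb
    simpa using hq0.add this
  · exact fun m => dist_nonneg
  · intro m
    calc dist (TT 𝒰 (z m)) (TT 𝒰 f)
        ≤ dist (TT 𝒰 (z m)) (TT 𝒰 (s m • x₀)) + dist (TT 𝒰 (s m • x₀)) (TT 𝒰 f) :=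
          dist_triangle _ _ _
    _ ≤ q m + dist (TT 𝒰 (s m • x₀)) (TT 𝒰 f) := by
        have := hs2 m
        rw [Metric.mem_ball, dist_comm] at this
        linarith [this]

end MetricCore

/-- The pointwise closure of the acting group inside `Y → Y`. -/
def EEset (H : Type*) (Y : Type*) [Group H] [TopologicalSpace Y] [MulAction H Y] :
    Set (Y → Y) :=
  closure (Set.range (fun h : H => fun z : Y => h • z))

section MetricCoreE

variable {H : Type*} [Group H] {Y : Type*} [MetricSpace Y] [CompactSpace Y] [MulAction H Y]

lemma TT_mem_EE (𝒰 : Ultrafilter H) : (fun z : Y => TT 𝒰 z) ∈ EEset H Y := by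
  have ht : Tendsto (fun h : H => fun z : Y => h • z) ↑𝒰 (𝓝 (fun z => TT 𝒰 z)) := by
    rw [tendsto_pi_nhds]; intro z; exact tendsto_TT 𝒰 z
  exact mem_closure_of_tendsto ht (Eventually.of_forall fun h => Set.mem_range_self h)

lemma smul_fun_mem_EE (h : H) : (fun z : Y => h • z) ∈ EEset H Y :=
  subset_closure (Set.mem_range_self h)

lemma EE_repr {p : Y → Y} (hp : p ∈ EEset H Y) :
    ∃ 𝒰 : Ultrafilter H, ∀ z, p z = TT 𝒰 z := by
  obtain ⟨𝒰, h𝒰⟩ :=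
    exists_ultrafilter_tendsto (Y := Y → Y) (f := fun h : H => fun z : Y => h • z) hp
  refine ⟨𝒰, fun z => ?_⟩
  exact (TT_eq ((tendsto_pi_nhds.mp h𝒰) z)).symm

lemma comp_smul_mem_EE {p : Y → Y} (hp : p ∈ EEset H Y) (h : H) :
    (fun z : Y => p (h • z)) ∈ EEset H Y := by
  obtain ⟨𝒰, h𝒰⟩ := EE_repr hp
  have heq : (fun z : Y => p (h • z)) = fun z => TT (𝒰.map (· * h)) z := by
    funext z
    rw [h𝒰]
    symm
    apply TT_eq
    rw [Ultrafilter.coe_map, tendsto_map'_iff]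
    simpa [Function.comp_def, mul_smul] using tendsto_TT 𝒰 (h • z)
  rw [heq]
  exact TT_mem_EE _

end MetricCoreE

section MetricCore2

variable {H : Type*} [Group H] {Y : Type*} [MetricSpace Y] [CompactSpace Y] [MulAction H Y]

variable (haa : AAH (H := H) (Y := Y)) (hc : ∀ h : H, Continuous fun z : Y => h • z)
    (x₀ : Y) (hdense : DenseRange (fun h : H => h • x₀))

include haa hc hdense

/-- The Baire category window lemma: some nonempty (relatively) open subset of the
enveloping semigroup has uniformly small diameter. -/
lemma exists_window {ε : ℝ} (hε : 0 < ε) :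
    ∃ O : Set (Y → Y), IsOpen O ∧ (O ∩ EEset H Y).Nonempty ∧
      ∀ p ∈ O ∩ EEset H Y, ∀ q ∈ O ∩ EEset H Y, ∀ z : Y, dist (p z) (q z) ≤ ε := by
  classical
  haveI : Nonempty Y := ⟨x₀⟩
  set ε' : ℝ := ε / 4 with hε'def
  have hε' : 0 < ε' := by positivity
  -- dense sequence
  haveI : TopologicalSpace.SeparableSpace Y := by
    rw [← TopologicalSpace.isSeparable_univ_iff]
    exact isCompact_univ.isSeparable
  obtain ⟨d, hd⟩ := TopologicalSpace.exists_dense_seq Y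
  -- finite nets
  have hnet : ∀ k : ℕ, ∃ t : Set Y, t.Finite ∧
      (univ : Set Y) ⊆ ⋃ x ∈ t, Metric.ball x (1 / (k + 1)) := by
    intro k
    obtain ⟨t, _, htfin, hcov⟩ := finite_cover_balls_of_compact
      (isCompact_univ : IsCompact (univ : Set Y)) (e := 1 / (k + 1)) (by positivity)
    exact ⟨t, htfin, hcov⟩
  choose net hnetfin hnetcov using hnet
  set netF : ℕ → Finset Y := fun k => (hnetfin k).toFinset with hnetF
  -- the compact subtype
  have hEEclosed : IsClosed (EEset H Y) := isClosed_closure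
  have hEEcompact : IsCompact (EEset H Y) := hEEclosed.isCompact
  haveI : CompactSpace ↥(EEset H Y) := isCompact_iff_compactSpace.mp hEEcompact
  haveI : Nonempty ↥(EEset H Y) := ⟨⟨_, smul_fun_mem_EE (1 : H)⟩⟩
  -- the closed pieces
  set Fam : (Σ k : ℕ, (↥(netF k) → ℕ)) → Set ↥(EEset H Y) := fun i =>
    (⋂ j : ↥(netF i.1), {p : ↥(EEset H Y) | dist (p.1 j.1) (d (i.2 j)) ≤ ε'}) ∩
    (⋂ z : Y, ⋂ z' : Y,
      {p : ↥(EEset H Y) | dist z z' ≤ 3 / (i.1 + 1) → dist (p.1 z) (p.1 z') ≤ ε'})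
    with hFam
  have hclosed : ∀ i, IsClosed (Fam i) := by
    intro i
    apply IsClosed.inter
    · apply isClosed_iInter
      intro j
      exact isClosed_le (Continuous.dist
        ((continuous_apply (j.1 : Y)).comp continuous_subtype_val) continuous_const)
        continuous_const
    · apply isClosed_iInter
      intro z
      apply isClosed_iInter
      intro z'
      by_cases hzz : dist z z' ≤ 3 / (i.1 + 1)
      · have : {p : ↥(EEset H Y) | dist z z' ≤ 3 / (i.1 + 1) → dist (p.1 z) (p.1 z') ≤ ε'}
            = {p : ↥(EEset H Y) | dist (p.1 z) (p.1 z') ≤ ε'} := by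
          ext p; simp [hzz]
        rw [this]
        exact isClosed_le (Continuous.dist
          ((continuous_apply z).comp continuous_subtype_val)
          ((continuous_apply z').comp continuous_subtype_val)) continuous_const
      · have : {p : ↥(EEset H Y) | dist z z' ≤ 3 / (i.1 + 1) → dist (p.1 z) (p.1 z') ≤ ε'}
            = univ := by
          ext p; simp [hzz]
        rw [this]
        exact isClosed_univ
  have hcover : (⋃ i, Fam i) = univ := by
    rw [eq_univ_iff_forall]
    intro p
    obtain ⟨𝒰, h𝒰⟩ := EE_repr p.2
    have hpc : Continuous p.1 := by
      have : p.1 = fun z => TT 𝒰 z := funext h𝒰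
      rw [this]
      exact TT_cont haa hc x₀ hdense 𝒰
    have huc : UniformContinuous p.1 := CompactSpace.uniformContinuous_of_continuous hpc
    obtain ⟨δ, hδpos, hδ⟩ := Metric.uniformContinuous_iff.mp huc ε' hε'
    obtain ⟨k, hk⟩ := exists_nat_gt (3 / δ)
    have hkey : (3 : ℝ) / (k + 1) < δ := by
      rw [div_lt_iff₀ (by positivity)]
      rw [div_lt_iff₀ hδpos] at hk
      nlinarith
    have hval : ∀ j : ↥(netF k), ∃ n : ℕ, dist (p.1 j.1) (d n) ≤ ε' := by
      intro j
      obtain ⟨n, hn⟩ := hd.exists_dist_lt (p.1 j.1) hε'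
      exact ⟨n, hn.le⟩
    choose v hv using hval
    rw [mem_iUnion]
    refine ⟨⟨k, v⟩, ?_, ?_⟩
    · rw [mem_iInter]
      exact fun j => hv j
    · rw [mem_iInter]
      intro z
      rw [mem_iInter]
      intro z'
      intro hzz
      exact (hδ (lt_of_le_of_lt hzz hkey)).le
  obtain ⟨i₀, hi₀⟩ := nonempty_interior_of_iUnion_of_closed hclosed hcover
  obtain ⟨O, hOopen, hOeq⟩ := isOpen_induced_iff.mp (isOpen_interior
    (s := Fam i₀))
  refine ⟨O, hOopen, ?_, ?_⟩
  · obtain ⟨p₀, hp₀⟩ := hi₀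
    rw [← hOeq] at hp₀
    exact ⟨p₀.1, hp₀, p₀.2⟩
  · intro p hp q hq z
    have hpF : (⟨p, hp.2⟩ : ↥(EEset H Y)) ∈ Fam i₀ := by
      have : (⟨p, hp.2⟩ : ↥(EEset H Y)) ∈ interior (Fam i₀) := by
        rw [← hOeq]; exact hp.1
      exact interior_subset this
    have hqF : (⟨q, hq.2⟩ : ↥(EEset H Y)) ∈ Fam i₀ := by
      have : (⟨q, hq.2⟩ : ↥(EEset H Y)) ∈ interior (Fam i₀) := by
        rw [← hOeq]; exact hq.1
      exact interior_subset this
    -- pick a net point close to z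
    have hz := hnetcov i₀.1 (mem_univ z)
    rw [mem_iUnion₂] at hz
    obtain ⟨x, hxmem, hxball⟩ := hz
    have hxF : x ∈ netF i₀.1 := by
      simp only [hnetF]
      exact (hnetfin i₀.1).mem_toFinset.mpr hxmem
    set j : ↥(netF i₀.1) := ⟨x, hxF⟩ with hj
    have hdist_zx : dist z x ≤ 3 / (i₀.1 + 1) := by
      rw [Metric.mem_ball] at hxball
      have hpos : (0:ℝ) < (i₀.1 : ℝ) + 1 := by positivity
      have h3 : (3:ℝ) / ((i₀.1 : ℝ) + 1) = 3 * (1 / ((i₀.1:ℝ) + 1)) := by ring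
      have h1 : (1:ℝ) / ((i₀.1 : ℝ) + 1) = 1 * (1 / ((i₀.1:ℝ) + 1)) := by ring
      have hq : (0:ℝ) < 1 / ((i₀.1:ℝ) + 1) := by positivity
      rw [h3]
      rw [h1] at hxball
      nlinarith [hxball, hq]
    have hpj : dist (p ((j : Y))) (d (i₀.2 j)) ≤ ε' := (mem_iInter.mp hpF.1) j
    have hqj : dist (q ((j : Y))) (d (i₀.2 j)) ≤ ε' := (mem_iInter.mp hqF.1) j
    have hpz : dist (p z) (p ((j : Y))) ≤ ε' :=
      (mem_iInter.mp (mem_iInter.mp hpF.2 z)) (j : Y) hdist_zx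
    have hqz : dist (q z) (q ((j : Y))) ≤ ε' :=
      (mem_iInter.mp (mem_iInter.mp hqF.2 z)) (j : Y) hdist_zx
    have tri : dist (p z) (q z) ≤
        dist (p z) (p (j : Y)) + dist (p (j : Y)) (q (j : Y)) + dist (q (j : Y)) (q z) :=
      dist_triangle4 _ _ _ _
    have tri2 : dist (p (j : Y)) (q (j : Y)) ≤
        dist (p (j : Y)) (d (i₀.2 j)) + dist (d (i₀.2 j)) (q (j : Y)) := dist_triangle _ _ _
    have hc2 : dist (d (i₀.2 j)) (q (j : Y)) = dist (q (j : Y)) (d (i₀.2 j)) := dist_comm _ _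
    have hc3 : dist (q (j : Y)) (q z) = dist (q z) (q (j : Y)) := dist_comm _ _
    rw [hε'def] at hpj hqj hpz hqz
    rw [hc2] at tri2
    rw [hc3] at tri
    linarith

end MetricCore2

section MetricCore3

variable {H : Type*} [Group H] {Y : Type*} [MetricSpace Y] [CompactSpace Y] [MulAction H Y]

variable (haa : AAH (H := H) (Y := Y)) (hc : ∀ h : H, Continuous fun z : Y => h • z)
    (x₀ : Y) (hdense : DenseRange (fun h : H => h • x₀))

lemma EE_comp (hc : ∀ h : H, Continuous fun z : Y => h • z) {p q : Y → Y}
    (hp : p ∈ EEset H Y) (hq : q ∈ EEset H Y) : (fun z => p (q z)) ∈ EEset H Y := by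
  obtain ⟨𝒰, h𝒰⟩ := EE_repr hp
  obtain ⟨𝒱, h𝒱⟩ := EE_repr hq
  have heq : (fun z => p (q z)) = fun z => TT (𝒰.bind fun h => 𝒱.map (fun s => h * s)) z := by
    funext z
    rw [h𝒱, h𝒰]
    symm
    apply TT_eq
    refine tendsto_bind _ _ (φ := fun h => h • TT 𝒱 z) (fun h => ?_) (tendsto_TT 𝒰 (TT 𝒱 z))
    rw [Ultrafilter.coe_map, tendsto_map'_iff]
    have := ((hc h).tendsto (TT 𝒱 z)).comp (tendsto_TT 𝒱 z)
    simpa [Function.comp_def, mul_smul] using this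
  rw [heq]
  exact TT_mem_EE _

include haa hc hdense

lemma core_UE : UniformEquicontinuous (fun h : H => fun z : Y => h • z) := by
  rw [Metric.uniformEquicontinuous_iff]
  intro ε hε
  have hε4 : 0 < ε / 4 := by positivity
  obtain ⟨O, hOopen, hOne, hOwin⟩ := exists_window haa hc x₀ hdense hε4
  obtain ⟨r₀, hr₀⟩ := hOne
  -- a group element inside the window
  obtain ⟨f₀, hf₀O, hf₀r⟩ := mem_closure_iff.mp hr₀.2 O hOopen hr₀.1
  obtain ⟨g₀, rfl⟩ := hf₀r
  have hg₀O : (fun z : Y => g₀ • z) ∈ O ∩ EEset H Y := ⟨hf₀O, smul_fun_mem_EE g₀⟩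
  -- covering of EE by open sets V k
  set V : H → Set (Y → Y) := fun k => {r : Y → Y | (fun z : Y => r (k • z)) ∈ O} with hV
  have hVopen : ∀ k, IsOpen (V k) :=
    fun k => hOopen.preimage (continuous_pi fun z => continuous_apply (k • z))
  have hEEcompact : IsCompact (EEset H Y) := isClosed_closure.isCompact
  have hVcover : EEset H Y ⊆ ⋃ k : H, V k := by
    intro p hp
    obtain ⟨𝒰, h𝒰⟩ := EE_repr hp
    have hpc : Continuous p := by
      have : p = fun z => TT 𝒰 z := funext h𝒰
      rw [this]; exact TT_cont haa hc x₀ hdense 𝒰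
    set pinv : Y → Y := fun z => TT (invU 𝒰) z with hpinv
    have hppinv : ∀ z, p (pinv z) = z := by
      intro z
      rw [h𝒰 (pinv z)]
      exact AA2 haa 𝒰 z
    set qhat : Y → Y := fun z => pinv (r₀ z) with hqhat
    have hqhatEE : qhat ∈ EEset H Y := EE_comp hc (TT_mem_EE (invU 𝒰)) hr₀.2
    have hΦ : Continuous (fun r : Y → Y => fun z : Y => p (r z)) :=
      continuous_pi fun z => hpc.comp (continuous_apply z)
    have hΦq : qhat ∈ (fun r : Y → Y => fun z : Y => p (r z)) ⁻¹' O := by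
      have heq : (fun z : Y => p (qhat z)) = r₀ := by
        funext z
        exact hppinv (r₀ z)
      show (fun z : Y => p (qhat z)) ∈ O
      rw [heq]
      exact hr₀.1
    obtain ⟨f, hfmem, hfrange⟩ := mem_closure_iff.mp hqhatEE _
      (hOopen.preimage hΦ) hΦq
    obtain ⟨k, rfl⟩ := hfrange
    rw [mem_iUnion]
    exact ⟨k, hfmem⟩
  obtain ⟨T, hT⟩ := hEEcompact.elim_finite_subcover V hVopen hVcover
  have hTne : T.Nonempty := by
    have h1 : (fun z : Y => (1 : H) • z) ∈ ⋃ k ∈ T, V k := hT (smul_fun_mem_EE 1)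
    rw [mem_iUnion₂] at h1
    obtain ⟨k, hkT, _⟩ := h1
    exact ⟨k, hkT⟩
  -- moduli
  obtain ⟨δ₂, hδ₂pos, hδ₂⟩ := Metric.uniformContinuous_iff.mp
    (CompactSpace.uniformContinuous_of_continuous (hc g₀)) (ε / 4) hε4
  have hmod : ∀ k : H, ∃ δ, 0 < δ ∧ ∀ a b : Y, dist a b < δ →
      dist (k⁻¹ • a) (k⁻¹ • b) < δ₂ := by
    intro k
    obtain ⟨δ, hδpos, hδ⟩ := Metric.uniformContinuous_iff.mp
      (CompactSpace.uniformContinuous_of_continuous (hc k⁻¹)) δ₂ hδ₂pos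
    exact ⟨δ, hδpos, fun a b hab => hδ hab⟩
  choose δf hδfpos hδf using hmod
  set δ : ℝ := T.inf' hTne δf with hδdef
  have hδpos : 0 < δ := by
    rw [hδdef, Finset.lt_inf'_iff]
    exact fun k _ => hδfpos k
  refine ⟨δ, hδpos, fun z z' hzz h => ?_⟩
  have hhV : (fun z : Y => h • z) ∈ ⋃ k ∈ T, V k := hT (smul_fun_mem_EE h)
  rw [mem_iUnion₂] at hhV
  obtain ⟨k, hkT, hkV⟩ := hhV
  have hsO : (fun z : Y => (h * k) • z) ∈ O := by
    have heq : (fun z : Y => (h * k) • z) = fun z : Y => (fun w : Y => h • w) (k • z) := by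
      funext z; rw [mul_smul]
    rw [heq]
    exact hkV
  have hsmem : (fun z : Y => (h * k) • z) ∈ O ∩ EEset H Y := ⟨hsO, smul_fun_mem_EE _⟩
  have hk1 : dist (k⁻¹ • z) (k⁻¹ • z') < δ₂ :=
    hδf k z z' (lt_of_lt_of_le hzz (T.inf'_le _ hkT))
  have h1 := hOwin _ hsmem _ hg₀O (k⁻¹ • z)
  have h2 := hOwin _ hsmem _ hg₀O (k⁻¹ • z')
  have h3 := hδ₂ hk1
  have tri : dist ((h*k) • (k⁻¹ • z)) ((h*k) • (k⁻¹ • z')) ≤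
      dist ((h*k) • (k⁻¹ • z)) (g₀ • (k⁻¹ • z)) + dist (g₀ • (k⁻¹ • z)) (g₀ • (k⁻¹ • z'))
        + dist (g₀ • (k⁻¹ • z')) ((h*k) • (k⁻¹ • z')) := dist_triangle4 _ _ _ _
  have hz1 : (h*k) • (k⁻¹ • z) = h • z := by rw [mul_smul, smul_inv_smul]
  have hz2 : (h*k) • (k⁻¹ • z') = h • z' := by rw [mul_smul, smul_inv_smul]
  rw [hz1, hz2] at tri
  have hcm : dist (g₀ • (k⁻¹ • z')) (h • z') = dist (h • z') (g₀ • (k⁻¹ • z')) := dist_comm _ _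
  rw [hcm] at tri
  have h2' : dist (h • z') (g₀ • (k⁻¹ • z')) ≤ ε / 4 := by rw [← hz2]; exact h2
  have h1' : dist (h • z) (g₀ • (k⁻¹ • z)) ≤ ε / 4 := by rw [← hz1]; exact h1
  linarith

end MetricCore3

section MetricCore4

variable {H : Type*} [Group H] {Y : Type*} [MetricSpace Y] [CompactSpace Y] [MulAction H Y]

variable (haa : AAH (H := H) (Y := Y)) (hc : ∀ h : H, Continuous fun z : Y => h • z)
    (x₀ : Y) (hdense : DenseRange (fun h : H => h • x₀))

include haa hc hdense

lemma core_contra (F : Y → ℝ) (hF : Continuous F) {ε : ℝ} (hε : 0 < ε) (g : ℕ → H)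
    (w : ℕ → ℕ → Y) (hsep : ∀ n m, n ≠ m → ε ≤ |F (g n • w n m) - F (g m • w n m)|) :
    False := by
  classical
  haveI : Nonempty Y := ⟨x₀⟩
  set η : ℝ := ε / 4 with hηdef
  have hηpos : 0 < η := by positivity
  have hUE := core_UE haa hc x₀ hdense
  rw [Metric.uniformEquicontinuous_iff] at hUE
  obtain ⟨δF, hδFpos, hδF⟩ := Metric.uniformContinuous_iff.mp
    (CompactSpace.uniformContinuous_of_continuous hF) η hηpos
  obtain ⟨δU, hδUpos, hδU⟩ := hUE δF hδFpos
  obtain ⟨t, _, htfin, hcov⟩ := finite_cover_balls_of_compact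
    (isCompact_univ : IsCompact (univ : Set Y)) hδUpos
  set tF : Finset Y := htfin.toFinset with htF
  -- bound for F
  obtain ⟨B, hB⟩ : ∃ B : ℝ, ∀ y : Y, |F y| ≤ B := by
    obtain ⟨B, hB⟩ := (isCompact_univ.image hF).isBounded.subset_closedBall 0
    refine ⟨B, fun y => ?_⟩
    have := hB (mem_image_of_mem F (mem_univ y))
    rwa [Metric.mem_closedBall, Real.dist_0_eq_abs] at this
  -- integer truncation tuples
  set lo : ℤ := ⌊-(B / η)⌋ with hlo
  set hi : ℤ := ⌊B / η⌋ with hhi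
  have hτmem : ∀ (n : ℕ) (j : ↥tF), ⌊F (g n • (j : Y)) / η⌋ ∈ Finset.Icc lo hi := by
    intro n j
    rw [Finset.mem_Icc]
    have habs := abs_le.mp (hB (g n • (j : Y)))
    constructor
    · apply Int.floor_le_floor
      rw [show -(B / η) = (-B) / η by ring]
      gcongr
      exact habs.1
    · apply Int.floor_le_floor
      gcongr
      exact habs.2
  set τ : ℕ → (↥tF → ↥(Finset.Icc lo hi)) := fun n j => ⟨_, hτmem n j⟩ with hτ
  obtain ⟨n, m, hnm, heqnm⟩ := Finite.exists_ne_map_eq_of_infinite τ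
  have hfloor : ∀ j : ↥tF, ⌊F (g n • (j : Y)) / η⌋ = ⌊F (g m • (j : Y)) / η⌋ := by
    intro j
    have := congrFun heqnm j
    simpa [hτ, Subtype.ext_iff] using this
  have hclose : ∀ j : ↥tF, |F (g n • (j : Y)) - F (g m • (j : Y))| ≤ η := by
    intro j
    have h1 := Int.abs_sub_lt_one_of_floor_eq_floor (hfloor j)
    have h2 : F (g n • (j : Y)) / η - F (g m • (j : Y)) / η
        = (F (g n • (j : Y)) - F (g m • (j : Y))) / η := by ring
    rw [h2, abs_div, abs_of_pos hηpos, div_lt_one hηpos] at h1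
    exact h1.le
  have hglob : ∀ z : Y, |F (g n • z) - F (g m • z)| ≤ 3 * η := by
    intro z
    have hz := hcov (mem_univ z)
    rw [mem_iUnion₂] at hz
    obtain ⟨x, hxmem, hxball⟩ := hz
    rw [Metric.mem_ball] at hxball
    have hxF : x ∈ tF := htfin.mem_toFinset.mpr hxmem
    have e1 : dist (g n • z) (g n • x) < δF := hδU z x hxball (g n)
    have e2 : dist (g m • z) (g m • x) < δF := hδU z x hxball (g m)
    have f1 : |F (g n • z) - F (g n • x)| < η := by
      have := hδF e1
      rwa [Real.dist_eq] at this
    have f2 : |F (g m • z) - F (g m • x)| < η := by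
      have := hδF e2
      rwa [Real.dist_eq] at this
    have f3 := hclose ⟨x, hxF⟩
    calc |F (g n • z) - F (g m • z)|
        = |(F (g n • z) - F (g n • x)) + (F (g n • x) - F (g m • x))
            + (F (g m • x) - F (g m • z))| := by ring_nf
      _ ≤ |F (g n • z) - F (g n • x)| + |F (g n • x) - F (g m • x)|
            + |F (g m • x) - F (g m • z)| := abs_add_three _ _ _
      _ ≤ 3 * η := by
          have f2' : |F (g m • x) - F (g m • z)| < η := by rwa [abs_sub_comm] at f2
          linarith
  have := hsep n m hnm
  have := hglob (w n m)
  rw [hηdef] at this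
  linarith

end MetricCore4

/-- From a non-totally-bounded set, extract a uniformly separated sequence. -/
lemma exists_sep_seq {Z : Type*} [MetricSpace Z] {S : Set Z} (hS : ¬ TotallyBounded S) :
    ∃ ε > (0:ℝ), ∃ u : ℕ → Z, (∀ n, u n ∈ S) ∧ ∀ n m, n ≠ m → ε ≤ dist (u n) (u m) := by
  classical
  rw [Metric.totallyBounded_iff] at hS
  push_neg at hS
  obtain ⟨ε, hεpos, hε⟩ := hS
  have key : ∀ T : Finset Z, ∃ c, c ∈ S ∧ ∀ b ∈ T, ε ≤ dist c b := by
    intro T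
    by_contra hcon
    push_neg at hcon
    refine hε T T.finite_toSet fun c hc => ?_
    obtain ⟨b, hbT, hbd⟩ := hcon c hc
    rw [mem_iUnion₂]
    exact ⟨b, hbT, by rwa [Metric.mem_ball]⟩
  choose pick hpickS hpickdist using key
  let v : ℕ → Finset Z := fun n => Nat.rec ∅ (fun _ w => insert (pick w) w) n
  have hv : ∀ n, v (n + 1) = insert (pick (v n)) (v n) := fun n => rfl
  have hvmono : ∀ m n, m ≤ n → v m ⊆ v n := by
    intro m n hmn
    induction n with
    | zero =>
      have : m = 0 := by omega
      subst this
      exact subset_rfl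
    | succ k ih =>
      rcases Nat.lt_or_ge m (k+1) with h | h
      · have : v m ⊆ v k := ih (by omega)
        rw [hv]
        exact this.trans (Finset.subset_insert _ _)
      · have : m = k + 1 := by omega
        subst this
        exact subset_rfl
  refine ⟨ε, hεpos, fun n => pick (v n), fun n => hpickS (v n), ?_⟩
  have main : ∀ m n, m < n → ε ≤ dist (pick (v n)) (pick (v m)) := by
    intro m n hmn
    apply hpickdist (v n)
    have h1 : pick (v m) ∈ v (m + 1) := by rw [hv]; exact Finset.mem_insert_self _ _
    exact hvmono (m+1) n hmn h1
  intro n m hnm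
  rcases Nat.lt_or_ge n m with h | h
  · rw [dist_comm]; exact main n m h
  · exact main m n (by omega)

/-- Finitely many continuous functions detecting an entourage (gauge lemma). -/
lemma gauge {X : Type*} [UniformSpace X] [CompactSpace X] [T2Space X] {U₀ : Set (X × X)}
    (hU₀ : U₀ ∈ 𝓤 X) : ∃ T : Finset C(X, ℝ), ∀ p : X × X, p ∉ U₀ →
      ∃ f ∈ T, 1/2 < |f p.1 - f p.2| := by
  classical
  obtain ⟨V₁, hV₁u, hV₁sub⟩ := (uniformity_hasBasis_open (α := X)).mem_iff.mp hU₀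
  set K : Set (X × X) := V₁ᶜ with hK
  have hKclosed : IsClosed K := hV₁u.2.isClosed_compl
  have hKcompact : IsCompact K := hKclosed.isCompact
  set W : C(X, ℝ) → Set (X × X) := fun f => {p : X × X | 1/2 < |f p.1 - f p.2|} with hWdef
  have hWopen : ∀ f, IsOpen (W f) := by
    intro f
    have : Continuous fun p : X × X => |f p.1 - f p.2| :=
      ((f.continuous.comp continuous_fst).sub (f.continuous.comp continuous_snd)).abs
    exact isOpen_lt continuous_const this
  have hWcover : K ⊆ ⋃ f : C(X, ℝ), W f := by
    intro p hp
    have hne : p.1 ≠ p.2 := by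
      intro heq
      apply hp
      have : p = (p.1, p.1) := by
        ext
        · rfl
        · exact heq.symm
      rw [this]
      exact refl_mem_uniformity hV₁u.1
    obtain ⟨f, hf0, hf1, _⟩ := exists_continuous_zero_one_of_isClosed
      (isClosed_singleton (x := p.1)) (isClosed_singleton (x := p.2))
      (Set.disjoint_singleton.mpr hne)
    rw [mem_iUnion]
    refine ⟨f, ?_⟩
    have h1 : f p.1 = 0 := hf0 rfl
    have h2 : f p.2 = 1 := hf1 rfl
    show 1/2 < |f p.1 - f p.2|
    rw [h1, h2]
    norm_num
  obtain ⟨T, hT⟩ := hKcompact.elim_finite_subcover W hWopen hWcover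
  refine ⟨T, fun p hp => ?_⟩
  have hpK : p ∈ K := fun hmem => hp (hV₁sub hmem)
  have := hT hpK
  rw [mem_iUnion₂] at this
  obtain ⟨f, hfT, hfW⟩ := this
  exact ⟨f, hfT, hfW⟩

/-- The subgroup generated by a countable set is countable. -/
lemma countable_closure_subgroup {G : Type*} [Group G] {S : Set G} (hS : S.Countable) :
    (Subgroup.closure S : Set G).Countable := by
  classical
  haveI := hS.to_subtype
  have h1 : (FreeGroup.lift (Subtype.val : S → G)).range = Subgroup.closure S := by
    rw [FreeGroup.range_lift_eq_closure, Subtype.range_val]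
  rw [← h1, MonoidHom.coe_range]
  haveI : Countable (FreeGroup ↥S) := inferInstanceAs (Countable (Quot _))
  apply Set.countable_range

lemma core_contra' {H : Type*} [Group H] {Y : Type*} [TopologicalSpace Y] [CompactSpace Y]
    [TopologicalSpace.MetrizableSpace Y] [MulAction H Y]
    (haa : AAH (H := H) (Y := Y)) (hc : ∀ h : H, Continuous fun z : Y => h • z)
    (x₀ : Y) (hdense : DenseRange (fun h : H => h • x₀))
    (F : Y → ℝ) (hF : Continuous F) {ε : ℝ} (hε : 0 < ε) (g : ℕ → H) (w : ℕ → ℕ → Y)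
    (hsep : ∀ n m, n ≠ m → ε ≤ |F (g n • w n m) - F (g m • w n m)|) : False := by
  letI : MetricSpace Y := TopologicalSpace.metrizableSpaceMetric Y
  exact core_contra haa hc x₀ hdense F hF hε g w hsep

end Stmt18Aux

/-- `x₀` is an almost automorphic point: for every ultrafilter `𝒰` on `G` and every `y`,
if `t ↦ t • x₀` converges to `y` along `𝒰` then `t ↦ t⁻¹ • y` converges to `x₀` along `𝒰`. -/
def AAPoint (G : Type*) {X : Type*} [Group G] [TopologicalSpace X] [MulAction G X]
    (x₀ : X) : Prop :=
  ∀ (𝒰 : Ultrafilter G) (y : X),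
    Filter.Tendsto (fun t : G => t • x₀) (𝒰 : Filter G) (nhds y) →
    Filter.Tendsto (fun t : G => t⁻¹ • y) (𝒰 : Filter G) (nhds x₀)

/-- Final assertion of Theorem 6.2.6: a minimal compact flow all of whose points are
almost automorphic is (uniformly) equicontinuous. -/
theorem stmt18 {G X : Type*} [Group G] [TopologicalSpace G] [IsTopologicalGroup G]
    [UniformSpace X] [CompactSpace X] [T2Space X] [MulAction G X]
    (hc : Continuous fun p : G × X => p.1 • p.2)
    (hmin : ∀ x : X, DenseRange fun g : G => g • x)
    (haa : ∀ x : X, AAPoint G x) :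
    UniformEquicontinuous fun g : G => fun x : X => g • x := by
  classical
  open Filter Topology Set Uniformity in
  rcases isEmpty_or_nonempty X with hXe | hXne
  · intro U hU
    refine Filter.Eventually.of_forall fun xy => (hXe.false xy.1).elim
  by_contra hUE
  -- each group element acts continuously
  have hcg : ∀ g : G, Continuous fun x : X => g • x := fun g =>
    hc.comp (continuous_const.prodMk continuous_id)
  obtain ⟨x₀⟩ := hXne
  -- extract the failure data
  unfold UniformEquicontinuous at hUE
  push_neg at hUE
  obtain ⟨U₀, hU₀mem, hU₀⟩ := hUE
  replace hU₀ : ∃ᶠ xy in uniformity X, ¬ ∀ g : G, (g • xy.1, g • xy.2) ∈ U₀ :=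
    hU₀.mono fun xy h => by push_neg; exact h
  have hfail : ∀ W ∈ uniformity X, ∃ xy : X × X, xy ∈ W ∧ ∃ g : G,
      (g • xy.1, g • xy.2) ∉ U₀ := by
    intro W hW
    obtain ⟨xy, hxyW, hxy⟩ := Filter.frequently_iff.mp hU₀ hW
    push_neg at hxy
    exact ⟨xy, hxyW, hxy⟩
  -- gauge functions
  obtain ⟨T, hT⟩ := Stmt18Aux.gauge hU₀mem
  -- the associated families of continuous functions
  set Fmk : C(X, ℝ) → G → C(X, ℝ) := fun f g =>
    ⟨fun x => f (g • x), f.continuous.comp (hcg g)⟩ with hFmk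
  -- some family is not totally bounded
  have hnottb : ∃ f₀ ∈ T, ¬ TotallyBounded (Set.range (Fmk f₀)) := by
    by_contra htb
    push_neg at htb
    have hWf : ∀ f : C(X, ℝ), ∃ Wf ∈ uniformity X, f ∈ T → ∀ g : G, ∀ u v : X,
        (u, v) ∈ Wf → |f (g • u) - f (g • v)| < 1/2 := by
      intro f
      by_cases hf : f ∈ T
      · have htbf := htb f hf
        rw [Metric.totallyBounded_iff] at htbf
        obtain ⟨C, hCfin, hC⟩ := htbf (1/8) (by norm_num)
        refine ⟨⋂ c ∈ C, {q : X × X | dist (c q.1) (c q.2) < 1/8}, ?_, ?_⟩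
        · refine (Filter.biInter_mem hCfin).mpr fun c _ => ?_
          exact (CompactSpace.uniformContinuous_of_continuous c.continuous)
            (Metric.dist_mem_uniformity (by norm_num))
        · intro _ g u v huv
          have hmem := hC (Set.mem_range_self (f := Fmk f) g)
          rw [Set.mem_iUnion₂] at hmem
          obtain ⟨c, hcC, hcball⟩ := hmem
          rw [Metric.mem_ball] at hcball
          have h1 : dist (Fmk f g u) (c u) ≤ dist (Fmk f g) c :=
            ContinuousMap.dist_apply_le_dist u
          have h2 : dist (Fmk f g v) (c v) ≤ dist (Fmk f g) c :=
            ContinuousMap.dist_apply_le_dist v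
          rw [Set.mem_iInter₂] at huv
          have h3 := huv c hcC
          have he1 : Fmk f g u = f (g • u) := rfl
          have he2 : Fmk f g v = f (g • v) := rfl
          have hd : |f (g • u) - f (g • v)| = dist (f (g • u)) (f (g • v)) :=
            (Real.dist_eq _ _).symm
          rw [hd]
          calc dist (f (g • u)) (f (g • v)) ≤
              dist (f (g • u)) (c u) + dist (c u) (c v) + dist (c v) (f (g • v)) :=
                dist_triangle4 _ _ _ _
          _ < dist (Fmk f g) c + 1/8 + dist (Fmk f g) c := by
              rw [← he1, ← he2]
              have h2' : dist (c v) (Fmk f g v) = dist (Fmk f g v) (c v) := dist_comm _ _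
              rw [h2']
              simp only [Set.mem_setOf_eq] at h3
              linarith
          _ < 1/2 := by linarith
      · exact ⟨Set.univ, Filter.univ_mem, fun hfT => absurd hfT hf⟩
    choose Wf hWfmem hWfprop using hWf
    have hWmem : (⋂ f ∈ T, Wf f) ∈ uniformity X :=
      (Filter.biInter_mem T.finite_toSet).mpr fun f _ => hWfmem f
    obtain ⟨xy, hxyW, g, hg⟩ := hfail _ hWmem
    obtain ⟨f, hfT, hfgt⟩ := hT _ hg
    rw [Set.mem_iInter₂] at hxyW
    have := hWfprop f hfT g xy.1 xy.2 (hxyW f hfT)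
    linarith
  obtain ⟨f₀, hf₀T, hf₀⟩ := hnottb
  -- separated sequence
  obtain ⟨ε₀, hε₀pos, u, huS, husep⟩ := Stmt18Aux.exists_sep_seq hf₀
  have hgex : ∀ n, ∃ gn : G, Fmk f₀ gn = u n := fun n => huS n
  choose g hg using hgex
  -- pointwise witnesses
  have hwit : ∀ n m : ℕ, ∃ k : G, n ≠ m →
      ε₀ / 4 ≤ |f₀ (g n • (k • x₀)) - f₀ (g m • (k • x₀))| := by
    intro n m
    by_cases hnm : n ≠ m
    · have hx : ∃ x : X, ε₀ / 2 ≤ |f₀ (g n • x) - f₀ (g m • x)| := by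
        by_contra hcon
        push_neg at hcon
        have hle : dist (Fmk f₀ (g n)) (Fmk f₀ (g m)) ≤ ε₀ / 2 := by
          rw [ContinuousMap.dist_le (by positivity)]
          intro x
          rw [Real.dist_eq]
          exact (hcon x).le
        have hge := husep n m hnm
        rw [← hg n, ← hg m] at hge
        linarith
      obtain ⟨x, hx⟩ := hx
      have hopen : IsOpen {z : X | ε₀ / 4 < |f₀ (g n • z) - f₀ (g m • z)|} := by
        apply isOpen_lt continuous_const
        exact ((f₀.continuous.comp (hcg (g n))).sub (f₀.continuous.comp (hcg (g m)))).abs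
      have hne : ({z : X | ε₀ / 4 < |f₀ (g n • z) - f₀ (g m • z)|}).Nonempty :=
        ⟨x, by simp only [Set.mem_setOf_eq]; linarith⟩
      obtain ⟨k, hk⟩ := (hmin x₀).exists_mem_open hopen hne
      exact ⟨k, fun _ => hk.le⟩
    · exact ⟨1, fun h => absurd h hnm⟩
  choose wit hwit using hwit
  -- the countable subgroup
  set Sset : Set G := Set.range g ∪ Set.range (fun q : ℕ × ℕ => wit q.1 q.2) with hSset
  have hScount : Sset.Countable := (Set.countable_range g).union (Set.countable_range _)
  set Hsub : Subgroup G := Subgroup.closure Sset with hHsub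
  haveI hHcount : Countable ↥Hsub := (Stmt18Aux.countable_closure_subgroup hScount).to_subtype
  have hgmem : ∀ n, g n ∈ Hsub := fun n =>
    Subgroup.subset_closure (Or.inl (Set.mem_range_self n))
  have hwitmem : ∀ n m, wit n m ∈ Hsub := fun n m =>
    Subgroup.subset_closure (Or.inr (Set.mem_range_self (n, m)))
  -- the ambient function space is metrizable
  haveI : TopologicalSpace.MetrizableSpace (↥Hsub → ℝ) := UniformSpace.metrizableSpace
  -- the coding map
  set Φ : X → (↥Hsub → ℝ) := fun x h => f₀ ((h : G) • x) with hΦdef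
  have hΦcont : Continuous Φ := continuous_pi fun h => f₀.continuous.comp (hcg (h : G))
  -- the action of Hsub on the function space
  letI actA : MulAction ↥Hsub (↥Hsub → ℝ) :=
    { smul := fun k η h => η (h * k)
      one_smul := fun η => by funext h; show η (h * 1) = η h; rw [mul_one]
      mul_smul := fun k₁ k₂ η => by
        funext h
        show η (h * (k₁ * k₂)) = η ((h * k₁) * k₂)
        rw [mul_assoc] }
  have hsmulA : ∀ (k : ↥Hsub) (η : ↥Hsub → ℝ) (h : ↥Hsub), (k • η) h = η (h * k) :=
    fun _ _ _ => rfl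
  have hΦeq : ∀ (k : ↥Hsub) (x : X), Φ ((k : G) • x) = k • Φ x := by
    intro k x
    funext h
    rw [hsmulA]
    show f₀ ((h : G) • (k : G) • x) = f₀ (((h * k : ↥Hsub) : G) • x)
    rw [smul_smul]
    norm_cast
  -- the phase space
  set Q : Set (↥Hsub → ℝ) := closure (Set.range fun k : ↥Hsub => k • Φ x₀) with hQdef
  have horbsub : (Set.range fun k : ↥Hsub => k • Φ x₀) ⊆ Set.range Φ := by
    rintro _ ⟨k, rfl⟩
    exact ⟨(k : G) • x₀, hΦeq k x₀⟩
  have hQsub : Q ⊆ Set.range Φ :=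
    closure_minimal horbsub (isCompact_range hΦcont).isClosed
  have hQcomp : IsCompact Q :=
    (isCompact_range hΦcont).of_isClosed_subset isClosed_closure hQsub
  have hkcontA : ∀ k : ↥Hsub, Continuous fun η : ↥Hsub → ℝ => k • η := fun k =>
    continuous_pi fun h => continuous_apply (h * k)
  have hQinv : ∀ k : ↥Hsub, Set.MapsTo (fun η => k • η) Q Q := by
    intro k η hη
    refine map_mem_closure (hkcontA k) hη ?_
    rintro _ ⟨k', rfl⟩
    exact ⟨k * k', mul_smul k k' (Φ x₀)⟩
  -- the subtype flow
  haveI hQcompS : CompactSpace ↥Q := isCompact_iff_compactSpace.mp hQcomp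
  letI actQ : MulAction ↥Hsub ↥Q :=
    { smul := fun k η => ⟨k • η.1, hQinv k η.2⟩
      one_smul := fun η => Subtype.ext (one_smul _ _)
      mul_smul := fun k₁ k₂ η => Subtype.ext (mul_smul _ _ _) }
  have hsval : ∀ (k : ↥Hsub) (η : ↥Q), ((k • η : ↥Q) : ↥Hsub → ℝ) = k • (η : ↥Hsub → ℝ) :=
    fun _ _ => rfl
  have hcY : ∀ k : ↥Hsub, Continuous fun η : ↥Q => k • η := fun k =>
    Continuous.subtype_mk ((hkcontA k).comp continuous_subtype_val) _
  have hy₀mem : Φ x₀ ∈ Q := subset_closure ⟨1, one_smul _ _⟩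
  set y₀ : ↥Q := ⟨Φ x₀, hy₀mem⟩ with hy₀def
  -- dense orbit
  have hdenseY : DenseRange fun k : ↥Hsub => k • y₀ := by
    intro η
    rw [closure_subtype]
    have himg : (Subtype.val '' Set.range fun k : ↥Hsub => k • y₀)
        = Set.range fun k : ↥Hsub => k • Φ x₀ := by
      ext w
      constructor
      · rintro ⟨_, ⟨k, rfl⟩, rfl⟩
        exact ⟨k, rfl⟩
      · rintro ⟨k, rfl⟩
        exact ⟨k • y₀, ⟨k, rfl⟩, rfl⟩
    rw [himg]
    exact η.2
  -- almost automorphy on the phase space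
  have haaY : Stmt18Aux.AAH (H := ↥Hsub) (Y := ↥Q) := by
    intro 𝒱 y w hyw
    obtain ⟨x, hx⟩ := hQsub y.2
    haveI : Nonempty X := ⟨x⟩
    set 𝒲 : Ultrafilter G := 𝒱.map (fun k : ↥Hsub => (k : G)) with h𝒲
    set y' : X := Stmt18Aux.uLim (𝒲.map fun g : G => g • x) with hy'
    have h1 : Tendsto (fun g : G => g • x) ↑𝒲 (𝓝 y') := by
      have := Stmt18Aux.uLim_spec (𝒲.map fun g : G => g • x)
      rwa [Ultrafilter.coe_map] at this
    have h1' : Tendsto (fun k : ↥Hsub => (k : G) • x) ↑𝒱 (𝓝 y') := by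
      rw [h𝒲, Ultrafilter.coe_map, tendsto_map'_iff] at h1
      exact h1
    have hyval : ∀ k : ↥Hsub, ((k • y : ↥Q) : ↥Hsub → ℝ) = Φ ((k : G) • x) := by
      intro k
      rw [hsval, hΦeq, hx]
    have hwval : (w : ↥Hsub → ℝ) = Φ y' := by
      have hv1 : Tendsto (fun k : ↥Hsub => ((k • y : ↥Q) : ↥Hsub → ℝ)) ↑𝒱
          (𝓝 (w : ↥Hsub → ℝ)) := (continuous_subtype_val.tendsto w).comp hyw
      have hv2 : Tendsto (fun k : ↥Hsub => Φ ((k : G) • x)) ↑𝒱 (𝓝 (Φ y')) :=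
        (hΦcont.tendsto y').comp h1'
      simp only [hyval] at hv1
      exact tendsto_nhds_unique hv1 hv2
    have haax := haa x 𝒲 y' h1
    have h2' : Tendsto (fun k : ↥Hsub => ((k : G))⁻¹ • y') ↑𝒱 (𝓝 x) := by
      rw [h𝒲, Ultrafilter.coe_map, tendsto_map'_iff] at haax
      exact haax
    have hkey : (fun k : ↥Hsub => ((k⁻¹ • w : ↥Q) : ↥Hsub → ℝ))
        = fun k : ↥Hsub => Φ (((k : G))⁻¹ • y') := by
      funext k
      rw [hsval, hwval, ← hΦeq]
      norm_cast
    have hval2 : Tendsto (fun k : ↥Hsub => ((k⁻¹ • w : ↥Q) : ↥Hsub → ℝ)) ↑𝒱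
        (𝓝 (y : ↥Hsub → ℝ)) := by
      rw [hkey, ← hx]
      exact (hΦcont.tendsto x).comp h2'
    exact Topology.IsInducing.subtypeVal.tendsto_nhds_iff.mpr hval2
  -- the final contradiction
  set FY : ↥Q → ℝ := fun η => (η : ↥Hsub → ℝ) 1 with hFYdef
  have hFY : Continuous FY := (continuous_apply (1 : ↥Hsub)).comp continuous_subtype_val
  set gY : ℕ → ↥Hsub := fun n => ⟨g n, hgmem n⟩ with hgY
  set wY : ℕ → ℕ → ↥Q := fun n m => (⟨wit n m, hwitmem n m⟩ : ↥Hsub) • y₀ with hwY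
  have hcomp : ∀ (a : ↥Hsub) (n m : ℕ),
      FY (a • ((⟨wit n m, hwitmem n m⟩ : ↥Hsub) • y₀)) = f₀ (((a : G) * wit n m) • x₀) := by
    intro a n m
    rw [← mul_smul]
    show (((a * ⟨wit n m, hwitmem n m⟩ : ↥Hsub) • y₀ : ↥Q) : ↥Hsub → ℝ) 1 = _
    rw [hsval, hsmulA, one_mul]
    show f₀ (((a * ⟨wit n m, hwitmem n m⟩ : ↥Hsub) : G) • x₀) = _
    norm_cast
  have hsepY : ∀ n m, n ≠ m → ε₀ / 4 ≤ |FY (gY n • wY n m) - FY (gY m • wY n m)| := by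
    intro n m hnm
    rw [hwY]
    rw [hcomp (gY n) n m, hcomp (gY m) n m]
    have := hwit n m hnm
    have hgn : ((gY n : ↥Hsub) : G) = g n := rfl
    have hgm : ((gY m : ↥Hsub) : G) = g m := rfl
    rw [hgn, hgm, mul_smul, mul_smul]
    exact this
  exact Stmt18Aux.core_contra' haaY hcY y₀ hdenseY FY hFY
    (show (0:ℝ) < ε₀ / 4 by positivity) gY wY hsepY
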